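/- Consider the planar flexible-joint robot with Hamiltonian H(q,p) = (1/2)p^T M(q_{l2})^{-1}p + (1/2)(q_l−q_m)^T K_s(q_l−q_m), parameters a1,a2,b > 0 with a1·a2 > b², I_m1,I_m2 > 0, K_s diagonal positive definite, K_c symmetric positive definite, α_li,α_mi,β_li,β_mi > 0, and q_* ∈ ℝ². Define on ℝ^{12} the function H_ζ(q,p,x_cl,x_cm) = H(q,p) + Σ_{i=1}^{2}(α_li/β_li)ln(cosh(β_li(q_l−q_*+x_cl)_i)) + Σ_{i=1}^{2}(α_mi/β_mi)ln(cosh(β_mi(q_m−q_*+x_cm)_i)) + (1/2)x_cm^T K_c x_cm. Then the gradient of H_ζ vanishes at ζ_* = (q_*,q_*,0,0,0,0), and ζ_* is a strict local minimizer of H_ζ. -/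

import Mathlib

open Matrix

noncomputable section

abbrev I4 := Fin 2 ⊕ Fin 2
abbrev I8 := I4 ⊕ I4
abbrev I12 := I8 ⊕ (Fin 2 ⊕ Fin 2)
abbrev E8 := EuclideanSpace ℝ I8
abbrev E12 := EuclideanSpace ℝ I12

def Ml (a1 a2 b θ : ℝ) : Matrix (Fin 2) (Fin 2) ℝ :=
  !![a1 + a2 + 2 * b * Real.cos θ, a2 + b * Real.cos θ;
     a2 + b * Real.cos θ, a2]

def Mfull (a1 a2 b Im1 Im2 θ : ℝ) : Matrix I4 I4 ℝ :=
  Matrix.fromBlocks (Ml a1 a2 b θ) 0 0 (Matrix.diagonal ![Im1, Im2])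

def qp (ζ : E12) : E8 := WithLp.toLp 2 (fun j => ζ (Sum.inl j))
def qlv (ζ : E12) : Fin 2 → ℝ := fun i => ζ (Sum.inl (Sum.inl (Sum.inl i)))
def qmv (ζ : E12) : Fin 2 → ℝ := fun i => ζ (Sum.inl (Sum.inl (Sum.inr i)))
def pvec (ζ : E12) : I4 → ℝ := fun j => ζ (Sum.inl (Sum.inr j))
def xcl (ζ : E12) : Fin 2 → ℝ := fun i => ζ (Sum.inr (Sum.inl i))
def xcm (ζ : E12) : Fin 2 → ℝ := fun i => ζ (Sum.inr (Sum.inr i))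
def ql2 (ζ : E12) : ℝ := ζ (Sum.inl (Sum.inl (Sum.inl 1)))

/-- The robot Hamiltonian as a function of the augmented state. -/
def Hrobot (a1 a2 b Im1 Im2 : ℝ) (Ks : Matrix (Fin 2) (Fin 2) ℝ) (ζ : E12) : ℝ :=
  (1 / 2 : ℝ) * (pvec ζ ⬝ᵥ ((Mfull a1 a2 b Im1 Im2 (ql2 ζ))⁻¹).mulVec (pvec ζ)) +
  (1 / 2 : ℝ) * ((fun i => qlv ζ i - qmv ζ i) ⬝ᵥ Ks.mulVec fun i => qlv ζ i - qmv ζ i)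

/-- The augmented closed-loop energy
`H_ζ = H + Φ_l(z_l) + Φ_m(z_m) + (1/2) x_cm^T K_c x_cm`,
with `Φ_l(z) = Σ (α_li/β_li) ln cosh(β_li z_i)` and similarly for `Φ_m`, where
`z_l = q_l − q_* + x_cl` and `z_m = q_m − q_* + x_cm`. -/
def Hzeta (a1 a2 b Im1 Im2 : ℝ) (Ks Kc : Matrix (Fin 2) (Fin 2) ℝ)
    (αl βl αm βm : Fin 2 → ℝ) (qstar : Fin 2 → ℝ) (ζ : E12) : ℝ :=
  Hrobot a1 a2 b Im1 Im2 Ks ζ +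
  (∑ i, (αl i / βl i) * Real.log (Real.cosh (βl i * (qlv ζ i - qstar i + xcl ζ i)))) +
  (∑ i, (αm i / βm i) * Real.log (Real.cosh (βm i * (qmv ζ i - qstar i + xcm ζ i)))) +
  (1 / 2 : ℝ) * (xcm ζ ⬝ᵥ Kc.mulVec (xcm ζ))

/-- The desired equilibrium `ζ_* = (q_*, q_*, 0, 0, 0, 0)`. -/
def zetastar (qstar : Fin 2 → ℝ) : E12 := WithLp.toLp 2 (fun i : I12 =>
  match i with
  | Sum.inl (Sum.inl (Sum.inl i)) => qstar i
  | Sum.inl (Sum.inl (Sum.inr i)) => qstar i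
  | _ => 0)

lemma Ml_posDef {a1 a2 b θ : ℝ} (ha2 : 0 < a2)
    (hab : b ^ 2 < a1 * a2) : (Ml a1 a2 b θ).PosDef := by
  apply Matrix.PosDef.of_dotProduct_mulVec_pos
  · show (Ml a1 a2 b θ)ᴴ = _
    ext i j
    fin_cases i <;> fin_cases j <;> simp [Ml]
  · intro x hx
    have hq : dotProduct (star x) ((Ml a1 a2 b θ) *ᵥ x) =
        (a1 + a2 + 2*b*Real.cos θ) * x 0 ^ 2
          + 2*(a2 + b*Real.cos θ) * (x 0 * x 1) + a2 * x 1 ^ 2 := by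
      simp [Ml, dotProduct, Matrix.mulVec, Fin.sum_univ_two]
      ring
    rw [hq]
    have hc2 : Real.cos θ ^ 2 ≤ 1 := Real.cos_sq_le_one θ
    by_cases h0 : x 0 = 0
    · have h1 : x 1 ≠ 0 := by
        intro h1
        exact hx (funext fun i => by fin_cases i <;> simpa)
      have : 0 < x 1 ^ 2 := by positivity
      rw [h0]; nlinarith
    · have h0' : 0 < x 0 ^ 2 := by positivity
      have hkey : 0 < (a1*a2 - b^2*Real.cos θ^2) * x 0 ^ 2 := by
        apply mul_pos _ h0'
        nlinarith [sq_nonneg b]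
      nlinarith [sq_nonneg (a2 * x 1 + (a2 + b * Real.cos θ) * x 0)]

lemma fromBlocks_posDef {m n : Type*} [Fintype m] [Fintype n] [DecidableEq m] [DecidableEq n]
    {A : Matrix m m ℝ} {D : Matrix n n ℝ} (hA : A.PosDef) (hD : D.PosDef) :
    (Matrix.fromBlocks A 0 0 D).PosDef := by
  apply Matrix.PosDef.of_dotProduct_mulVec_pos
  · exact Matrix.IsHermitian.fromBlocks hA.1 (by simp) hD.1
  · intro x hx
    rw [Matrix.fromBlocks_mulVec, Matrix.dotProduct_block, star_trivial]
    simp only [Sum.elim_comp_inl, Sum.elim_comp_inr, Matrix.zero_mulVec, add_zero, zero_add]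
    have hor : x ∘ Sum.inl ≠ 0 ∨ x ∘ Sum.inr ≠ 0 := by
      by_contra h
      push_neg at h
      exact hx (funext fun j => by
        rcases j with j | j
        · exact congrFun h.1 j
        · exact congrFun h.2 j)
    have hAn := hA.posSemidef.dotProduct_mulVec_nonneg (x ∘ Sum.inl)
    have hDn := hD.posSemidef.dotProduct_mulVec_nonneg (x ∘ Sum.inr)
    rw [star_trivial] at hAn hDn
    rcases hor with h | h
    · have := hA.dotProduct_mulVec_pos h; rw [star_trivial] at this; linarith
    · have := hD.dotProduct_mulVec_pos h; rw [star_trivial] at this; linarith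

lemma Mfull_posDef {a1 a2 b Im1 Im2 θ : ℝ} (ha2 : 0 < a2)
    (hab : b ^ 2 < a1 * a2) (hIm1 : 0 < Im1) (hIm2 : 0 < Im2) :
    (Mfull a1 a2 b Im1 Im2 θ).PosDef :=
  fromBlocks_posDef (Ml_posDef ha2 hab)
    (Matrix.PosDef.diagonal (fun i => by fin_cases i <;> simpa))


set_option maxHeartbeats 1000000 in
/-- claims (32)–(33): the gradient of the closed-loop energy `H_ζ`
vanishes at `ζ_*`, and `ζ_*` is a strict local minimizer of `H_ζ`. -/
theorem Hzeta_strict_local_min (a1 a2 b Im1 Im2 : ℝ)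
    (ha1 : 0 < a1) (ha2 : 0 < a2) (hb : 0 < b) (hab : b ^ 2 < a1 * a2)
    (hIm1 : 0 < Im1) (hIm2 : 0 < Im2)
    (ks : Fin 2 → ℝ) (hks : ∀ i, 0 < ks i)
    (Kc : Matrix (Fin 2) (Fin 2) ℝ) (hKc : Kc.PosDef)
    (αl βl αm βm : Fin 2 → ℝ)
    (hαl : ∀ i, 0 < αl i) (hβl : ∀ i, 0 < βl i)
    (hαm : ∀ i, 0 < αm i) (hβm : ∀ i, 0 < βm i)
    (qstar : Fin 2 → ℝ) :
    gradient (Hzeta a1 a2 b Im1 Im2 (Matrix.diagonal ks) Kc αl βl αm βm qstar)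
        (zetastar qstar) = 0 ∧
    ∀ᶠ ζ in nhdsWithin (zetastar qstar) {zetastar qstar}ᶜ,
      Hzeta a1 a2 b Im1 Im2 (Matrix.diagonal ks) Kc αl βl αm βm qstar (zetastar qstar) <
        Hzeta a1 a2 b Im1 Im2 (Matrix.diagonal ks) Kc αl βl αm βm qstar ζ := by
  set f := Hzeta a1 a2 b Im1 Im2 (Matrix.diagonal ks) Kc αl βl αm βm qstar with hf
  -- value at the equilibrium
  have hpstar : pvec (zetastar qstar) = 0 := by
    funext j; rcases j with j | j <;> rfl
  have hqlstar : qlv (zetastar qstar) = qstar := rfl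
  have hqmstar : qmv (zetastar qstar) = qstar := rfl
  have hxclstar : xcl (zetastar qstar) = fun _ => 0 := rfl
  have hxcmstar : xcm (zetastar qstar) = fun _ => 0 := rfl
  have hstar : f (zetastar qstar) = 0 := by
    rw [hf]
    unfold Hzeta Hrobot
    rw [hpstar, hqlstar, hqmstar, hxclstar, hxcmstar]
    simp [dotProduct, Matrix.mulVec, Fin.sum_univ_two]
  -- strict global positivity away from the equilibrium
  have key : ∀ ζ : E12, ζ ≠ zetastar qstar → 0 < f ζ := by
    intro ζ hζ
    have hM : (Mfull a1 a2 b Im1 Im2 (ql2 ζ)).PosDef := Mfull_posDef ha2 hab hIm1 hIm2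
    have hMinv : ((Mfull a1 a2 b Im1 Im2 (ql2 ζ))⁻¹).PosDef := hM.inv
    set A := pvec ζ ⬝ᵥ ((Mfull a1 a2 b Im1 Im2 (ql2 ζ))⁻¹).mulVec (pvec ζ) with hA
    set B := (fun i => qlv ζ i - qmv ζ i) ⬝ᵥ
        (Matrix.diagonal ks).mulVec (fun i => qlv ζ i - qmv ζ i) with hB
    set C := xcm ζ ⬝ᵥ Kc.mulVec (xcm ζ) with hC
    have hAnn : 0 ≤ A := by
      have := hMinv.posSemidef.dotProduct_mulVec_nonneg (pvec ζ); rwa [star_trivial] at this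
    have hBval : B = ks 0 * (qlv ζ 0 - qmv ζ 0) ^ 2 + ks 1 * (qlv ζ 1 - qmv ζ 1) ^ 2 := by
      rw [hB]
      simp [dotProduct, Matrix.mulVec_diagonal, Fin.sum_univ_two]
      ring
    have hBnn : 0 ≤ B := by
      rw [hBval]
      have := (hks 0).le; have := (hks 1).le
      positivity
    have hCnn : 0 ≤ C := by
      have := hKc.posSemidef.dotProduct_mulVec_nonneg (xcm ζ); rwa [star_trivial] at this
    have hlnn : ∀ (α β : Fin 2 → ℝ), (∀ i, 0 < α i) → (∀ i, 0 < β i) → ∀ (z : Fin 2 → ℝ) i,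
        (0:ℝ) ≤ (α i / β i) * Real.log (Real.cosh (β i * z i)) := by
      intro α β hα hβ z i
      have hlog : 0 ≤ Real.log (Real.cosh (β i * z i)) :=
        Real.log_nonneg (Real.one_le_cosh _)
      exact mul_nonneg (div_pos (hα i) (hβ i)).le hlog
    have hS3nn : 0 ≤ ∑ i, (αl i / βl i) *
        Real.log (Real.cosh (βl i * (qlv ζ i - qstar i + xcl ζ i))) :=
      Finset.sum_nonneg fun i _ => hlnn αl βl hαl hβl (fun i => qlv ζ i - qstar i + xcl ζ i) i
    have hS4nn : 0 ≤ ∑ i, (αm i / βm i) *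
        Real.log (Real.cosh (βm i * (qmv ζ i - qstar i + xcm ζ i))) :=
      Finset.sum_nonneg fun i _ => hlnn αm βm hαm hβm (fun i => qmv ζ i - qstar i + xcm ζ i) i
    by_contra hpos
    push_neg at hpos
    rw [hf] at hpos
    unfold Hzeta Hrobot at hpos
    rw [← hA, ← hB, ← hC] at hpos
    -- each nonnegative term must vanish
    have hA0 : A = 0 := le_antisymm (by linarith) hAnn
    have hB0 : B = 0 := le_antisymm (by linarith) hBnn
    have hC0 : C = 0 := le_antisymm (by linarith) hCnn
    have hS30 : (∑ i, (αl i / βl i) *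
        Real.log (Real.cosh (βl i * (qlv ζ i - qstar i + xcl ζ i)))) = 0 :=
      le_antisymm (by linarith) hS3nn
    have hS40 : (∑ i, (αm i / βm i) *
        Real.log (Real.cosh (βm i * (qmv ζ i - qstar i + xcm ζ i)))) = 0 :=
      le_antisymm (by linarith) hS4nn
    -- p = 0
    have hp0 : pvec ζ = 0 := by
      by_contra hp
      have := hMinv.dotProduct_mulVec_pos hp
      rw [star_trivial] at this
      rw [← hA] at this
      linarith [hA0 ▸ this]
    -- x_cm = 0
    have hxm0 : xcm ζ = 0 := by
      by_contra hp
      have := hKc.dotProduct_mulVec_pos hp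
      rw [star_trivial] at this
      rw [← hC] at this
      linarith [hC0 ▸ this]
    -- q_l = q_m
    have hqeq : ∀ i, qlv ζ i = qmv ζ i := by
      have h0 : ks 0 * (qlv ζ 0 - qmv ζ 0) ^ 2 = 0 ∧ ks 1 * (qlv ζ 1 - qmv ζ 1) ^ 2 = 0 := by
        have hb0 := hBval ▸ hB0
        have n0 := mul_nonneg (hks 0).le (sq_nonneg (qlv ζ 0 - qmv ζ 0))
        have n1 := mul_nonneg (hks 1).le (sq_nonneg (qlv ζ 1 - qmv ζ 1))
        constructor <;> linarith
      intro i
      have : (qlv ζ i - qmv ζ i) ^ 2 = 0 := by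
        fin_cases i
        · rcases mul_eq_zero.mp h0.1 with h | h
          · exact absurd h (hks 0).ne'
          · exact h
        · rcases mul_eq_zero.mp h0.2 with h | h
          · exact absurd h (hks 1).ne'
          · exact h
      have := (pow_eq_zero_iff two_ne_zero).mp this
      linarith
    -- the log-cosh sums force the arguments to vanish
    have hzero : ∀ (α β : Fin 2 → ℝ), (∀ i, 0 < α i) → (∀ i, 0 < β i) → ∀ (z : Fin 2 → ℝ),
        (∑ i, (α i / β i) * Real.log (Real.cosh (β i * z i))) = 0 → ∀ i, z i = 0 := by
      intro α β hα hβ z hsum i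
      have hterm : ∀ j ∈ Finset.univ, (α j / β j) * Real.log (Real.cosh (β j * z j)) = 0 :=
        (Finset.sum_eq_zero_iff_of_nonneg (fun j _ => hlnn α β hα hβ z j)).mp hsum
      have hi := hterm i (Finset.mem_univ i)
      by_contra hzi
      have harg : β i * z i ≠ 0 := mul_ne_zero (hβ i).ne' hzi
      have hlt := Real.log_pos (Real.one_lt_cosh.mpr harg)
      have hdiv : 0 < α i / β i := div_pos (hα i) (hβ i)
      nlinarith
    have hql : ∀ i, qlv ζ i - qstar i + xcl ζ i = 0 :=
      hzero αl βl hαl hβl _ hS30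
    have hqm : ∀ i, qmv ζ i - qstar i + xcm ζ i = 0 :=
      hzero αm βm hαm hβm _ hS40
    have hqm' : ∀ i, qmv ζ i = qstar i := by
      intro i
      have := hqm i
      have hx : xcm ζ i = 0 := congrFun hxm0 i
      linarith
    have hql' : ∀ i, qlv ζ i = qstar i := fun i => (hqeq i).trans (hqm' i)
    have hxl' : ∀ i, xcl ζ i = 0 := by
      intro i
      have := hql i
      have := hql' i
      linarith
    exact hζ (PiLp.ext fun j => by
      rcases j with ((i | i) | j) | (i | i)
      · exact hql' i
      · exact hqm' i
      · exact congrFun hp0 j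
      · exact hxl' i
      · exact congrFun hxm0 i)
  have hle : ∀ ζ : E12, f (zetastar qstar) ≤ f ζ := by
    intro ζ
    by_cases h : ζ = zetastar qstar
    · rw [h]
    · rw [hstar]; exact (key ζ h).le
  constructor
  · have hmin : IsLocalMin f (zetastar qstar) := Filter.Eventually.of_forall hle
    have hd : fderiv ℝ f (zetastar qstar) = 0 := hmin.fderiv_eq_zero
    unfold gradient
    rw [hd]
    simp
  · refine Filter.eventually_of_mem self_mem_nhdsWithin fun ζ hζ => ?_
    rw [hstar]
    exact key ζ hζ



end
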